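/- Let a be an odd nonnegative integer and b an even nonnegative integer, let λ = (1+a, 1^b) be the hook partition with arm length a and leg length b, and let α = (1 + (a−1)/2, 1^{b/2}). Then the Littlewood–Richardson coefficient c^λ_{αα} is at least 1. -/

import Mathlib

/-- A partition: a weakly decreasing finite sequence (list) of positive
integers. -/
def IsPartition (l : List ℕ) : Prop :=
  l.Pairwise (· ≥ ·) ∧ ∀ x ∈ l, 0 < x

/-- The `i`-th part (0-indexed) of a partition, `0` beyond its length. -/
def part (l : List ℕ) (i : ℕ) : ℕ := l.getD i 0

/-- Cell `(i, j)` (row `i`, column `j`, both 0-indexed) lies in the skew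
Young diagram `ν/λ`. -/
def InSkew (nu lam : List ℕ) (i j : ℕ) : Prop :=
  part lam i ≤ j ∧ j < part nu i

/-- Cell `(i, j)` comes weakly before cell `(r, c)` in the reverse reading
order: rows are read top to bottom, and each row is read right to left. -/
def ReadingLE (i j r c : ℕ) : Prop := i < r ∨ (i = r ∧ c ≤ j)

/-- `T` is a Littlewood–Richardson tableau of shape `ν/λ` and content `μ`:
`λ ⊆ ν`, the entries of `T` are positive exactly on the cells of the skew
diagram `ν/λ`, entries weakly increase from left to right along rows,
entries strictly increase from top to bottom down columns, for every `j ≥ 1`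
the entry `j` occurs exactly `μ_j` times, and the reverse reading word is a
lattice word: every prefix contains at least as many occurrences of `j` as
of `j + 1`, for every `j ≥ 1`. -/
structure IsLRTableau (nu lam mu : List ℕ) (T : ℕ → ℕ → ℕ) : Prop where
  subset : ∀ i, part lam i ≤ part nu i
  support : ∀ i j, 0 < T i j ↔ InSkew nu lam i j
  row_weak : ∀ i j j', InSkew nu lam i j → InSkew nu lam i j' → j ≤ j' →
    T i j ≤ T i j'
  col_strict : ∀ i i' j, InSkew nu lam i j → InSkew nu lam i' j → i < i' →
    T i j < T i' j
  content : ∀ k : ℕ, {p : ℕ × ℕ | T p.1 p.2 = k + 1}.ncard = part mu k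
  lattice : ∀ r c k : ℕ,
    {p : ℕ × ℕ | T p.1 p.2 = k + 2 ∧ ReadingLE p.1 p.2 r c}.ncard ≤
    {p : ℕ × ℕ | T p.1 p.2 = k + 1 ∧ ReadingLE p.1 p.2 r c}.ncard

/-- The Littlewood–Richardson coefficient `c^ν_{λμ}`: the number of
Littlewood–Richardson tableaux of shape `ν/λ` and content `μ`. -/
noncomputable def lrCoeff (nu lam mu : List ℕ) : ℕ :=
  {T : ℕ → ℕ → ℕ | IsLRTableau nu lam mu T}.ncard

/-- The Newell–Littlewood coefficient
`N^ν_{λμ} = Σ_{α,β,γ} c^λ_{αβ} · c^μ_{αγ} · c^ν_{βγ}`, the sum running over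
all triples of partitions `(α, β, γ)` (only finitely many terms are
nonzero). -/
noncomputable def nlCoeff (lam mu nu : List ℕ) : ℕ :=
  ∑ᶠ x : {l : List ℕ // IsPartition l} × {l : List ℕ // IsPartition l} ×
      {l : List ℕ // IsPartition l},
    lrCoeff lam x.1.val x.2.1.val * lrCoeff mu x.1.val x.2.2.val *
      lrCoeff nu x.2.1.val x.2.2.val

/-- The hook partition `(1 + a, 1^b)` with arm length `a` and leg length
`b`. -/
def hook (a b : ℕ) : List ℕ := (1 + a) :: List.replicate b 1

/-!
Write `a = 2m + 1` and `b = 2n`. The skew shape `λ/α` consists of the last `m + 1` cells of the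
first row and the last `n` cells of the first column. Filling the row with `1`s and the column,
top to bottom, with `2, 3, …, n + 1` gives a Littlewood–Richardson tableau of content `α`: its
reading word is `1^(m+1) 2 3 ⋯ (n+1)`. Since the entries of an LR tableau of content `μ` lie in
`{1, …, ℓ(μ)}` and its support is the finite skew diagram, there are only finitely many LR tableaux
of a given shape and content, so this one tableau makes the count positive.
-/

theorem part_le_sum (l : List ℕ) (i : ℕ) : part l i ≤ l.sum := by
  rcases lt_or_ge i l.length with hi | hi
  · rw [part, List.getD_eq_getElem _ _ hi]
    exact List.le_sum_of_mem (List.getElem_mem hi)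
  · rw [part, List.getD_eq_default _ _ hi]
    exact Nat.zero_le _

theorem lt_length_of_inSkew {nu lam : List ℕ} {i j : ℕ} (h : InSkew nu lam i j) :
    i < nu.length := by
  by_contra! hi
  have := h.2
  rw [part, List.getD_eq_default _ _ hi] at this
  omega

theorem finite_setOf_inSkew (nu lam : List ℕ) :
    {p : ℕ × ℕ | InSkew nu lam p.1 p.2}.Finite :=
  ((Set.finite_Iio nu.length).prod (Set.finite_Iio nu.sum)).subset fun p hp =>
    ⟨lt_length_of_inSkew hp, hp.2.trans_le (part_le_sum nu p.1)⟩

theorem ReadingLE.trans {i j r c r' c' : ℕ} (h : ReadingLE i j r c) (h' : ReadingLE r c r' c') :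
    ReadingLE i j r' c' := by
  unfold ReadingLE at *
  omega

theorem lattice_of_matching {T : ℕ → ℕ → ℕ}
    (hfin : ∀ k, {p : ℕ × ℕ | T p.1 p.2 = k + 1}.Finite) (pred : ℕ × ℕ → ℕ × ℕ)
    (hpred : ∀ p k, T p.1 p.2 = k + 2 →
      T (pred p).1 (pred p).2 = k + 1 ∧ ReadingLE (pred p).1 (pred p).2 p.1 p.2)
    (hinj : ∀ k, Set.InjOn pred {p | T p.1 p.2 = k + 2}) (r c k : ℕ) :
    {p : ℕ × ℕ | T p.1 p.2 = k + 2 ∧ ReadingLE p.1 p.2 r c}.ncard ≤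
      {p : ℕ × ℕ | T p.1 p.2 = k + 1 ∧ ReadingLE p.1 p.2 r c}.ncard :=
  Set.ncard_le_ncard_of_injOn pred
    (fun p hp => ⟨(hpred p k hp.1).1, (hpred p k hp.1).2.trans hp.2⟩)
    ((hinj k).mono fun _ hp => hp.1) ((hfin k).subset fun _ hp => hp.1)

namespace IsLRTableau

variable {nu lam mu : List ℕ} {T : ℕ → ℕ → ℕ}

theorem eq_zero_of_not_inSkew (hT : IsLRTableau nu lam mu T) {i j : ℕ}
    (h : ¬InSkew nu lam i j) : T i j = 0 := by
  by_contra hne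
  exact h ((hT.support i j).1 (Nat.pos_of_ne_zero hne))

theorem finite_setOf_eq_succ (hT : IsLRTableau nu lam mu T) (k : ℕ) :
    {p : ℕ × ℕ | T p.1 p.2 = k + 1}.Finite :=
  (finite_setOf_inSkew nu lam).subset fun p hp =>
    (hT.support p.1 p.2).1 (by rw [show T p.1 p.2 = k + 1 from hp]; omega)

theorem le_length (hT : IsLRTableau nu lam mu T) (i j : ℕ) : T i j ≤ mu.length := by
  by_contra! h
  obtain ⟨k, hk⟩ : ∃ k, T i j = k + 1 := ⟨T i j - 1, by omega⟩
  have hempty : {p : ℕ × ℕ | T p.1 p.2 = k + 1} = ∅ := by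
    rw [← Set.ncard_eq_zero (hT.finite_setOf_eq_succ k), hT.content k, part,
      List.getD_eq_default _ _ (by omega)]
  exact hempty.subset (show (i, j) ∈ {p : ℕ × ℕ | T p.1 p.2 = k + 1} from hk)

end IsLRTableau

theorem finite_setOf_isLRTableau (nu lam mu : List ℕ) :
    {T : ℕ → ℕ → ℕ | IsLRTableau nu lam mu T}.Finite := by
  set cells := {p : ℕ × ℕ | InSkew nu lam p.1 p.2}
  have : Finite cells := (finite_setOf_inSkew nu lam).to_subtype
  refine Set.Finite.of_injOn (f := fun T (p : cells) => T p.1.1 p.1.2)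
    (t := Set.univ.pi fun _ => Set.Iic mu.length) ?_ ?_ (Set.Finite.pi fun _ => Set.finite_Iic _)
  · exact fun T hT p _ => hT.le_length _ _
  · intro T₁ hT₁ T₂ hT₂ heq
    funext i j
    by_cases hij : InSkew nu lam i j
    · exact congrFun heq ⟨(i, j), hij⟩
    · rw [hT₁.eq_zero_of_not_inSkew hij, hT₂.eq_zero_of_not_inSkew hij]

theorem one_le_lrCoeff_of_isLRTableau {nu lam mu : List ℕ} {T : ℕ → ℕ → ℕ}
    (hT : IsLRTableau nu lam mu T) : 1 ≤ lrCoeff nu lam mu :=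
  (Set.ncard_pos (finite_setOf_isLRTableau nu lam mu)).2 ⟨T, hT⟩

theorem part_hook (a b i : ℕ) :
    part (hook a b) i = if i = 0 then 1 + a else if i ≤ b then 1 else 0 := by
  cases i with
  | zero => rfl
  | succ i =>
    simp only [part, hook, List.getD_cons_succ, Nat.add_one_ne_zero, if_false]
    split_ifs with h
    · exact List.getD_replicate _ (by omega)
    · exact List.getD_eq_default _ _ (by simp; omega)

theorem inSkew_hook_iff (m n i j : ℕ) :
    InSkew (hook (2 * m + 1) (2 * n)) (hook m n) i j ↔
      (i = 0 ∧ m + 1 ≤ j ∧ j < 2 * m + 2) ∨ (n + 1 ≤ i ∧ i ≤ 2 * n ∧ j = 0) := by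
  simp only [InSkew, part_hook]
  split_ifs <;> omega

def hookLRTableau (m n : ℕ) : ℕ → ℕ → ℕ := fun i j =>
  if i = 0 then (if m + 1 ≤ j ∧ j < 2 * m + 2 then 1 else 0)
  else if n + 1 ≤ i ∧ i ≤ 2 * n ∧ j = 0 then i - n + 1 else 0

theorem hookLRTableau_pos_iff (m n i j : ℕ) :
    0 < hookLRTableau m n i j ↔ InSkew (hook (2 * m + 1) (2 * n)) (hook m n) i j := by
  rw [inSkew_hook_iff, hookLRTableau]
  split_ifs <;> omega

theorem hookLRTableau_eq_succ_iff (m n i j k : ℕ) :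
    hookLRTableau m n i j = k + 1 ↔
      (k = 0 ∧ i = 0 ∧ m + 1 ≤ j ∧ j < 2 * m + 2) ∨ (1 ≤ k ∧ k ≤ n ∧ i = n + k ∧ j = 0) := by
  rw [hookLRTableau]
  split_ifs <;> first | omega | (rw [false_iff]; omega)

theorem setOf_hookLRTableau_eq_succ (m n k : ℕ) :
    {p : ℕ × ℕ | hookLRTableau m n p.1 p.2 = k + 1} =
      ↑(if k = 0 then (Finset.Ico (m + 1) (2 * m + 2)).image fun j => ((0 : ℕ), j)
        else if k ≤ n then {((n + k : ℕ), (0 : ℕ))} else (∅ : Finset (ℕ × ℕ))) := by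
  ext ⟨i, j⟩
  simp only [Set.mem_ofPred_eq, hookLRTableau_eq_succ_iff]
  split_ifs <;> simp_all [Prod.ext_iff] <;> omega

theorem ncard_setOf_hookLRTableau_eq_succ (m n k : ℕ) :
    {p : ℕ × ℕ | hookLRTableau m n p.1 p.2 = k + 1}.ncard = part (hook m n) k := by
  rw [setOf_hookLRTableau_eq_succ, Set.ncard_coe_finset, part_hook]
  split_ifs
  · rw [Finset.card_image_of_injective _ fun x y h => by simpa using h, Nat.card_Ico]
    omega
  · rfl
  · rfl

theorem isLRTableau_hookLRTableau (m n : ℕ) :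
    IsLRTableau (hook (2 * m + 1) (2 * n)) (hook m n) (hook m n) (hookLRTableau m n) where
  subset i := by
    rw [part_hook, part_hook]
    split_ifs <;> omega
  support := hookLRTableau_pos_iff m n
  row_weak i j j' h h' _ := by
    rw [inSkew_hook_iff] at h h'
    unfold hookLRTableau
    split_ifs <;> omega
  col_strict i i' j h h' _ := by
    rw [inSkew_hook_iff] at h h'
    unfold hookLRTableau
    split_ifs <;> omega
  content := ncard_setOf_hookLRTableau_eq_succ m n
  lattice := by
    -- each `k + 2` is matched with the `k + 1` just above it, the `2` with the first `1` of row 0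
    refine lattice_of_matching (fun k => ?_)
      (fun p => if p.1 = n + 1 then (0, m + 1) else (p.1 - 1, p.2)) (fun p k hp => ?_)
      (fun k p hp q hq _ => ?_)
    · exact (finite_setOf_inSkew _ _).subset fun p hp =>
        (hookLRTableau_pos_iff m n p.1 p.2).1 (by rw [show _ = k + 1 from hp]; omega)
    · rw [hookLRTableau_eq_succ_iff] at hp
      unfold ReadingLE
      split_ifs <;> simp only [hookLRTableau_eq_succ_iff, true_and] <;> omega
    · simp only [Set.mem_ofPred_eq, hookLRTableau_eq_succ_iff] at hp hq
      ext <;> omega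

/-- For the hook `λ = (1+a, 1^b)` with `a` odd and `b` even, and
`α = (1 + (a−1)/2, 1^{b/2})`, one has `c^λ_{αα} ≥ 1`. -/
theorem one_le_lrCoeff_hook_odd_arm (a b : ℕ) (ha : Odd a) (hb : Even b) :
    1 ≤ lrCoeff (hook a b) (hook ((a - 1) / 2) (b / 2))
        (hook ((a - 1) / 2) (b / 2)) := by
  obtain ⟨m, rfl⟩ := ha
  obtain ⟨n, rfl⟩ := hb
  have hm : (2 * m + 1 - 1) / 2 = m := by omega
  have hn : (n + n) / 2 = n := by omega
  rw [hm, hn, ← two_mul]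
  exact one_le_lrCoeff_of_isLRTableau (isLRTableau_hookLRTableau m n)
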